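/- Congruence of rewrite equivalence below substitution: (1) if Γ, x:A ⊢ ρ : s → t : B, Γ, x:A ⊢ ρ' : s' → t' : B, ρ ≈ ρ', and Γ ⊢ r : A, then ρ{x\r} ≈ ρ'{x\r}; (2) if Γ, x:A ⊢ r : B and Γ ⊢ ρ : s → t : A, Γ ⊢ ρ' : s' → t' : A with ρ ≈ ρ', then r⟨x\ρ⟩ ≈ r⟨x\ρ'⟩; (3) if additionally Γ, x:A ⊢ ρ ≈ ρ' and Γ ⊢ σ ≈ σ' (all suitably typed), then ρ⟦x\σ⟧ ≈ ρ'⟦x\σ'⟧. -/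
import Mathlib


namespace HOR

/-- Simple types over a set of base types `B`. -/
inductive Ty (B : Type) : Type
  | base : B → Ty B
  | arrow : Ty B → Ty B → Ty B

/-- Simply-typed λ-terms (de Bruijn representation) over a set of constants `C`. -/
inductive Tm (B C : Type) : Type
  | var : ℕ → Tm B C
  | const : C → Tm B C
  | lam : Tm B C → Tm B C
  | app : Tm B C → Tm B C → Tm B C

variable {B C R : Type}

namespace Tm

/-- Shift the free variables with index `≥ c` up by `d`. -/
def shift (d : ℕ) : ℕ → Tm B C → Tm B C
  | c, .var n => if n < c then .var n else .var (n + d)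
  | _, .const k => .const k
  | c, .lam t => .lam (shift d (c+1) t)
  | c, .app t u => .app (shift d c t) (shift d c u)

/-- Capture-avoiding substitution of the term `u` for the variable `k`. -/
def subst : Tm B C → ℕ → Tm B C → Tm B C
  | .var n, k, u => if n = k then shift k 0 u else if k < n then .var (n-1) else .var n
  | .const c, _, _ => .const c
  | .lam t, k, u => .lam (subst t (k+1) u)
  | .app t s, k, u => .app (subst t k u) (subst s k u)

/-- Iterated abstraction `λⁿ.t`. -/
def lamN : ℕ → Tm B C → Tm B C
  | 0, t => t
  | n+1, t => .lam (lamN n t)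

/-- Iterated application `t u₁ ⋯ uₙ`. -/
def apps : Tm B C → List (Tm B C) → Tm B C
  | t, [] => t
  | t, u :: us => apps (.app t u) us

/-- Parallel (simultaneous) substitution. -/
def psubst : (ℕ → Tm B C) → Tm B C → Tm B C
  | σ, .var n => σ n
  | _, .const c => .const c
  | σ, .lam t => .lam (psubst (fun n => match n with | 0 => .var 0 | m+1 => shift 1 0 (σ m)) t)
  | σ, .app t u => .app (psubst σ t) (psubst σ u)

/-- Number of free occurrences of variable `k`. -/
def varCount : Tm B C → ℕ → ℕ
  | .var n, k => if n = k then 1 else 0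
  | .const _, _ => 0
  | .lam t, k => varCount t (k+1)
  | .app t u, k => varCount t k + varCount u k

/-- Head of a term (spine head). -/
def head : Tm B C → Tm B C
  | .app t _ => head t
  | t => t

end Tm

/-- One-step β- or η-reduction, closed under arbitrary contexts. -/
inductive BetaEtaStep : Tm B C → Tm B C → Prop
  | beta : BetaEtaStep (.app (.lam t) u) (t.subst 0 u)
  | eta : BetaEtaStep (.lam (.app (Tm.shift 1 0 t) (.var 0))) t
  | lam : BetaEtaStep t t' → BetaEtaStep (.lam t) (.lam t')
  | appL : BetaEtaStep t t' → BetaEtaStep (.app t u) (.app t' u)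
  | appR : BetaEtaStep u u' → BetaEtaStep (.app t u) (.app t u')

/-- βη-equivalence of terms (the equivalence closure of one-step βη-reduction). -/
def BetaEtaEq : Tm B C → Tm B C → Prop :=
  Relation.ReflTransGen (fun a b => BetaEtaStep a b ∨ BetaEtaStep b a)

/-- Typing of terms (simply-typed λ-calculus over a signature `sig`). -/
inductive TmTy (sig : C → Ty B) : List (Ty B) → Tm B C → Ty B → Prop
  | var : Γ[n]? = some A → TmTy sig Γ (.var n) A
  | const : TmTy sig Γ (.const c) (sig c)
  | lam : TmTy sig (A :: Γ) t B' → TmTy sig Γ (.lam t) (.arrow A B')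
  | app : TmTy sig Γ t (.arrow A B') → TmTy sig Γ u A → TmTy sig Γ (.app t u) B'

mutual
  /-- η-long β-normal (i.e. βη̄-normal) forms. -/
  inductive LongNF {B C : Type} (sig : C → Ty B) : List (Ty B) → Tm B C → Ty B → Prop
    | lam : LongNF sig (A :: Γ) t B' → LongNF sig Γ (.lam t) (.arrow A B')
    | neutral : NeutralNF sig Γ t (.base b) → LongNF sig Γ t (.base b)
  /-- Neutral spines: a variable or constant applied to η-long β-normal arguments. -/
  inductive NeutralNF {B C : Type} (sig : C → Ty B) : List (Ty B) → Tm B C → Ty B → Prop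
    | var : Γ[n]? = some A → NeutralNF sig Γ (.var n) A
    | const : NeutralNF sig Γ (.const c) (sig c)
    | app : NeutralNF sig Γ t (.arrow A B') → LongNF sig Γ u A → NeutralNF sig Γ (.app t u) B'
end

/-- `A = A₁ → ⋯ → Aₙ → β` for some base type `β`. -/
def Ty.baseAfter : ℕ → Ty B → Prop
  | 0, A => ∃ b, A = Ty.base b
  | n+1, A => ∃ A₁ A₂, A = Ty.arrow A₁ A₂ ∧ Ty.baseAfter n A₂

/-- `t` is η-equivalent to the locally bound variable `i < b`. -/
def EtaBoundVar (b : ℕ) (t : Tm B C) (i : ℕ) : Prop :=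
  i < b ∧ BetaEtaEq t (.var i)

/-- Pattern condition for the body of a left-hand side with `n` metavariables,
under `b` local binders: every occurrence of a metavariable is applied to
terms η-equivalent to pairwise distinct locally bound variables. -/
inductive PatternBody (n : ℕ) : ℕ → Tm B C → Prop
  | lam : PatternBody n (b+1) t → PatternBody n b (.lam t)
  | rigidVar : i < b → (∀ u ∈ args, PatternBody n b u) →
      PatternBody n b (Tm.apps (.var i) args)
  | rigidConst : (∀ u ∈ args, PatternBody n b u) →
      PatternBody n b (Tm.apps (.const c) args)
  | flex : b ≤ m → m < b + n →
      (∃ is : List ℕ, is.Nodup ∧ List.Forall₂ (EtaBoundVar b) args is) →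
      PatternBody n b (Tm.apps (.var m) args)

/-- A Higher-order Rewriting System: a signature together with a set of rules
`⟨ϱ, ℓ, r⟩` (indexed by the rule symbols `R`), stored in closed form
`λx₁…xₙ.ℓ`, `λx₁…xₙ.r`, where `ℓ, r` are βη̄-normal terms of the same base type,
`ℓ` is a pattern that is not η-equivalent to a variable, and `fv(r) ⊆ fv(ℓ)`
(ensured by closedness of both sides over the same variables). -/
structure HRS (B C R : Type) where
  sig : C → Ty B
  nargs : R → ℕ
  lhsBody : R → Tm B C
  rhsBody : R → Tm B C
  ruleTy : R → Ty B
  rule_base : ∀ r, Ty.baseAfter (nargs r) (ruleTy r)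
  lhs_nf : ∀ r, LongNF sig [] (Tm.lamN (nargs r) (lhsBody r)) (ruleTy r)
  rhs_nf : ∀ r, LongNF sig [] (Tm.lamN (nargs r) (rhsBody r)) (ruleTy r)
  lhs_pattern : ∀ r, PatternBody (nargs r) 0 (lhsBody r)
  lhs_not_var : ∀ r i, ¬ BetaEtaEq (lhsBody r) (Tm.var i)

/-- The closed left-hand side `λx₁…xₙ.ℓ` of a rule. -/
def HRS.lhs (S : HRS B C R) (r : R) : Tm B C := Tm.lamN (S.nargs r) (S.lhsBody r)

/-- The closed right-hand side `λx₁…xₙ.r` of a rule. -/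
def HRS.rhs (S : HRS B C R) (r : R) : Tm B C := Tm.lamN (S.nargs r) (S.rhsBody r)

/-- Left-linearity: every variable of the left-hand side occurs exactly once. -/
def LeftLinear (S : HRS B C R) : Prop :=
  ∀ r, ∀ i < S.nargs r, Tm.varCount (S.lhsBody r) i = 1

/-- `u` occurs as a subterm under `k` binders. -/
inductive SubtermAt : Tm B C → ℕ → Tm B C → Prop
  | refl : SubtermAt t 0 t
  | lam : SubtermAt t k u → SubtermAt (.lam t) (k+1) u
  | appL : SubtermAt t k u → SubtermAt (.app t s) k u
  | appR : SubtermAt s k u → SubtermAt (.app t s) k u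

/-- No critical pairs: no non-variable subterm of a left-hand side unifies
(modulo βη, renaming apart) with a left-hand side, except trivially. -/
def NoCriticalPairs (S : HRS B C R) : Prop :=
  ∀ r₁ r₂ (k : ℕ) (u : Tm B C), SubtermAt (S.lhsBody r₁) k u →
    ¬ (∃ m, Tm.head u = Tm.var m ∧ k ≤ m) →
    (∃ σ₁ σ₂ : ℕ → Tm B C, (∀ i < k, σ₁ i = .var i) ∧ (∀ i < k, σ₂ i = .var i) ∧
        BetaEtaEq (Tm.psubst σ₁ u) (Tm.psubst σ₂ (Tm.shift k 0 (S.lhsBody r₂)))) →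
    (k = 0 ∧ u = S.lhsBody r₁ ∧ r₁ = r₂)

/-- An HRS is orthogonal when it is left-linear and has no critical pairs. -/
def Orthogonal (S : HRS B C R) : Prop := LeftLinear S ∧ NoCriticalPairs S

/-- The rewrite relation `→R` of an HRS on βη̄-normal terms:
root steps `θℓ → θr` closed under abstraction and application congruence. -/
inductive RStep (S : HRS B C R) : List (Ty B) → Ty B → Tm B C → Tm B C → Prop
  | root : LongNF S.sig Γ s A → LongNF S.sig Γ t A →
      args.length = S.nargs r →
      BetaEtaEq (Tm.apps (S.lhs r) args) s → BetaEtaEq (Tm.apps (S.rhs r) args) t →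
      RStep S Γ A s t
  | absC : RStep S (A :: Γ) B' s t → RStep S Γ (.arrow A B') (.lam s) (.lam t)
  | appL : RStep S Γ (.arrow A B') s t → TmTy S.sig Γ u A →
      RStep S Γ B' (.app s u) (.app t u)
  | appR : TmTy S.sig Γ s (.arrow A B') → RStep S Γ A u v →
      RStep S Γ B' (.app s u) (.app s v)

/-- Typed βη-equivalence judgment `Γ ⊢ s ≐ t : A`. -/
inductive TmEq (sig : C → Ty B) : List (Ty B) → Tm B C → Tm B C → Ty B → Prop
  | beta : TmTy sig (A :: Γ) s B' → TmTy sig Γ t A →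
      TmEq sig Γ (.app (.lam s) t) (s.subst 0 t) B'
  | eta : TmTy sig Γ s (.arrow A B') →
      TmEq sig Γ (.lam (.app (Tm.shift 1 0 s) (.var 0))) s (.arrow A B')
  | refl : TmTy sig Γ s A → TmEq sig Γ s s A
  | symm : TmEq sig Γ s t A → TmEq sig Γ t s A
  | trans : TmEq sig Γ s t A → TmEq sig Γ t u A → TmEq sig Γ s u A
  | congAbs : TmEq sig (A :: Γ) s t B' → TmEq sig Γ (.lam s) (.lam t) (.arrow A B')
  | congApp : TmEq sig Γ s s' (.arrow A B') → TmEq sig Γ t t' A →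
      TmEq sig Γ (.app s t) (.app s' t') B'

/-- Rewrites: variables, constants, rule symbols, abstraction and application
congruences, and composition `ρ;σ`. -/
inductive Rw (B C R : Type) : Type
  | var : ℕ → Rw B C R
  | const : C → Rw B C R
  | rule : R → Rw B C R
  | lam : Rw B C R → Rw B C R
  | app : Rw B C R → Rw B C R → Rw B C R
  | comp : Rw B C R → Rw B C R → Rw B C R

namespace Rw

/-- The source term of a rewrite. -/
def src (S : HRS B C R) : Rw B C R → Tm B C
  | .var n => .var n
  | .const c => .const c
  | .rule r => S.lhs r
  | .lam ρ => .lam (src S ρ)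
  | .app ρ σ => .app (src S ρ) (src S σ)
  | .comp ρ _ => src S ρ

/-- The target term of a rewrite. -/
def tgt (S : HRS B C R) : Rw B C R → Tm B C
  | .var n => .var n
  | .const c => .const c
  | .rule r => S.rhs r
  | .lam ρ => .lam (tgt S ρ)
  | .app ρ σ => .app (tgt S ρ) (tgt S σ)
  | .comp _ σ => tgt S σ

/-- Shift the free variables with index `≥ c` up by `d`. -/
def shiftR (d : ℕ) : ℕ → Rw B C R → Rw B C R
  | c, .var n => if n < c then .var n else .var (n + d)
  | _, .const k => .const k
  | _, .rule r => .rule r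
  | c, .lam ρ => .lam (shiftR d (c+1) ρ)
  | c, .app ρ σ => .app (shiftR d c ρ) (shiftR d c σ)
  | c, .comp ρ σ => .comp (shiftR d c ρ) (shiftR d c σ)

/-- Capture-avoiding substitution of the rewrite `ν` for the variable `k`.
When `ν` is (the coercion of) a term this is rewrite/term substitution `ρ{x\t}`,
and when the rewrite being substituted into is (the coercion of) a term this is
term/rewrite substitution `s⟨x\ρ⟩`. -/
def substR : Rw B C R → ℕ → Rw B C R → Rw B C R
  | .var n, k, ν => if n = k then shiftR k 0 ν else if k < n then .var (n-1) else .var n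
  | .const c, _, _ => .const c
  | .rule r, _, _ => .rule r
  | .lam ρ, k, ν => .lam (substR ρ (k+1) ν)
  | .app ρ σ, k, ν => .app (substR ρ k ν) (substR σ k ν)
  | .comp ρ σ, k, ν => .comp (substR ρ k ν) (substR σ k ν)

/-- Multisteps: rewrites with no occurrence of composition. -/
def IsMultistep : Rw B C R → Prop
  | .lam ρ => IsMultistep ρ
  | .app ρ σ => IsMultistep ρ ∧ IsMultistep σ
  | .comp _ _ => False
  | _ => True

/-- Iterated abstraction. -/
def lamN : ℕ → Rw B C R → Rw B C R
  | 0, ρ => ρ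
  | n+1, ρ => .lam (lamN n ρ)

/-- Iterated application. -/
def apps : Rw B C R → List (Rw B C R) → Rw B C R
  | ρ, [] => ρ
  | ρ, σ :: σs => apps (.app ρ σ) σs

end Rw

/-- Coercion of a term to the (unit/empty) rewrite it denotes. -/
def Tm.toRw : Tm B C → Rw B C R
  | .var n => .var n
  | .const c => .const c
  | .lam t => .lam (toRw t)
  | .app t u => .app (toRw t) (toRw u)

/-- Higher-Order Rewriting Logic: `Γ ⊢ ρ : s → t : A`. -/
inductive RwTy (S : HRS B C R) : List (Ty B) → Rw B C R → Tm B C → Tm B C → Ty B → Prop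
  | var : Γ[n]? = some A → RwTy S Γ (.var n) (.var n) (.var n) A
  | const : RwTy S Γ (.const c) (.const c) (.const c) (S.sig c)
  | rule : RwTy S Γ (.rule r) (S.lhs r) (S.rhs r) (S.ruleTy r)
  | abs : RwTy S (A :: Γ) ρ s t B' → RwTy S Γ (.lam ρ) (.lam s) (.lam t) (.arrow A B')
  | app : RwTy S Γ ρ s₀ s₁ (.arrow A B') → RwTy S Γ σ t₀ t₁ A →
      RwTy S Γ (.app ρ σ) (.app s₀ t₀) (.app s₁ t₁) B'
  | comp : RwTy S Γ ρ s₀ s₁ A → RwTy S Γ σ s₁ s₂ A → RwTy S Γ (.comp ρ σ) s₀ s₂ A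
  | conv : RwTy S Γ ρ s' t' A → TmEq S.sig Γ s s' A → TmEq S.sig Γ t' t A →
      RwTy S Γ ρ s t A

/-- A rewrite is well-typed (typable) if it has some typing judgment. -/
def WT (S : HRS B C R) (ρ : Rw B C R) : Prop := ∃ Γ s t A, RwTy S Γ ρ s t A

/-- Permutation equivalence `ρ ≈ σ` of rewrites: the reflexive, symmetric,
transitive, contextual closure of the axioms IdL, IdR, Assoc, Abs, App,
BetaTR, BetaRT and Eta, each applying only between well-typed rewrites. -/
inductive PermEq (S : HRS B C R) : Rw B C R → Rw B C R → Prop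
  | idL : WT S (.comp (Tm.toRw (Rw.src S ρ)) ρ) → WT S ρ →
      PermEq S (.comp (Tm.toRw (Rw.src S ρ)) ρ) ρ
  | idR : WT S (.comp ρ (Tm.toRw (Rw.tgt S ρ))) → WT S ρ →
      PermEq S (.comp ρ (Tm.toRw (Rw.tgt S ρ))) ρ
  | assoc : WT S (.comp (.comp ρ σ) τ) → WT S (.comp ρ (.comp σ τ)) →
      PermEq S (.comp (.comp ρ σ) τ) (.comp ρ (.comp σ τ))
  | abs : WT S (.comp (.lam ρ) (.lam σ)) → WT S (.lam (.comp ρ σ)) →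
      PermEq S (.comp (.lam ρ) (.lam σ)) (.lam (.comp ρ σ))
  | app : WT S (.comp (.app ρ₁ ρ₂) (.app σ₁ σ₂)) → WT S (.app (.comp ρ₁ σ₁) (.comp ρ₂ σ₂)) →
      PermEq S (.comp (.app ρ₁ ρ₂) (.app σ₁ σ₂)) (.app (.comp ρ₁ σ₁) (.comp ρ₂ σ₂))
  | betaTR : WT S (.app (.lam (Tm.toRw s)) ρ) → WT S (Rw.substR (Tm.toRw s) 0 ρ) →
      PermEq S (.app (.lam (Tm.toRw s)) ρ) (Rw.substR (Tm.toRw s) 0 ρ)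
  | betaRT : WT S (.app (.lam ρ) (Tm.toRw s)) → WT S (Rw.substR ρ 0 (Tm.toRw s)) →
      PermEq S (.app (.lam ρ) (Tm.toRw s)) (Rw.substR ρ 0 (Tm.toRw s))
  | eta : WT S (.lam (.app (Rw.shiftR 1 0 ρ) (.var 0))) → WT S ρ →
      PermEq S (.lam (.app (Rw.shiftR 1 0 ρ) (.var 0))) ρ
  | refl : WT S ρ → PermEq S ρ ρ
  | symm : PermEq S ρ σ → PermEq S σ ρ
  | trans : PermEq S ρ σ → PermEq S σ τ → PermEq S ρ τ
  | congLam : PermEq S ρ ρ' → PermEq S (.lam ρ) (.lam ρ')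
  | congAppL : PermEq S ρ ρ' → WT S σ → PermEq S (.app ρ σ) (.app ρ' σ)
  | congAppR : WT S ρ → PermEq S σ σ' → PermEq S (.app ρ σ) (.app ρ σ')
  | congCompL : PermEq S ρ ρ' → WT S σ → PermEq S (.comp ρ σ) (.comp ρ' σ)
  | congCompR : WT S ρ → PermEq S σ σ' → PermEq S (.comp ρ σ) (.comp ρ σ')

/-- Rewrite/rewrite substitution `ρ⟦x\σ⟧ := ρ{x\src(σ)} ; tgt(ρ)⟨x\σ⟩`. -/
def substRR (S : HRS B C R) (ρ : Rw B C R) (k : ℕ) (σ : Rw B C R) : Rw B C R :=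
  .comp (Rw.substR ρ k (Tm.toRw (Rw.src S σ))) (Rw.substR (Tm.toRw (Rw.tgt S ρ)) k σ)

/-- The rules of the flattening system `F`, closed under arbitrary contexts. -/
inductive FStepRaw (S : HRS B C R) : Rw B C R → Rw B C R → Prop
  | abs : FStepRaw S (.lam (.comp ρ σ)) (.comp (.lam ρ) (.lam σ))
  | app1 : Rw.IsMultistep μ →
      FStepRaw S (.app (.comp ρ σ) μ) (.comp (.app ρ (Tm.toRw (Rw.src S μ))) (.app σ μ))
  | app2 : Rw.IsMultistep μ →
      FStepRaw S (.app μ (.comp ρ σ)) (.comp (.app μ ρ) (.app (Tm.toRw (Rw.tgt S μ)) σ))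
  | app3 : FStepRaw S (.app (.comp ρ₁ ρ₂) (.comp σ₁ σ₂))
      (.comp (.app (.comp ρ₁ ρ₂) (Tm.toRw (Rw.src S σ₁)))
             (.app (Tm.toRw (Rw.tgt S ρ₂)) (.comp σ₁ σ₂)))
  | betaM : Rw.IsMultistep μ → Rw.IsMultistep ν →
      FStepRaw S (.app (.lam μ) ν) (Rw.substR μ 0 ν)
  | etaM : Rw.IsMultistep μ →
      FStepRaw S (.lam (.app (Rw.shiftR 1 0 μ) (.var 0))) μ
  | congLam : FStepRaw S ρ ρ' → FStepRaw S (.lam ρ) (.lam ρ')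
  | congAppL : FStepRaw S ρ ρ' → FStepRaw S (.app ρ σ) (.app ρ' σ)
  | congAppR : FStepRaw S σ σ' → FStepRaw S (.app ρ σ) (.app ρ σ')
  | congCompL : FStepRaw S ρ ρ' → FStepRaw S (.comp ρ σ) (.comp ρ' σ)
  | congCompR : FStepRaw S σ σ' → FStepRaw S (.comp ρ σ) (.comp ρ σ')

/-- A flattening step `ρ ↦ σ` (the system `F` is defined between typable rewrites). -/
def FStep (S : HRS B C R) (ρ σ : Rw B C R) : Prop := FStepRaw S ρ σ ∧ WT S ρ

/-- `↦`-normal forms. -/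
def FNormal (S : HRS B C R) (ρ : Rw B C R) : Prop := ∀ σ, ¬ FStep S ρ σ

/-- `ρ ↦* σ`. -/
def FStar (S : HRS B C R) : Rw B C R → Rw B C R → Prop := Relation.ReflTransGen (FStep S)

open Classical in
/-- `ρ♭`: the `↦`-normal form of `ρ` (when it exists; it is unique for
typable rewrites by strong normalization and confluence of `F`). -/
noncomputable def flatten (S : HRS B C R) (ρ : Rw B C R) : Rw B C R :=
  if h : ∃ σ, FStar S ρ σ ∧ FNormal S σ then h.choose else ρ

/-- Splitting `μ ⋗ μ₁;μ₂` of a multistep. -/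
inductive Split (S : HRS B C R) : Rw B C R → Rw B C R → Rw B C R → Prop
  | var : Split S (.var n) (.var n) (.var n)
  | const : Split S (.const c) (.const c) (.const c)
  | ruleL : Split S (.rule r) (.rule r) (Tm.toRw (S.rhs r))
  | ruleR : Split S (.rule r) (Tm.toRw (S.lhs r)) (.rule r)
  | abs : Split S μ μ₁ μ₂ → Split S (.lam μ) (.lam μ₁) (.lam μ₂)
  | app : Split S μ μ₁ μ₂ → Split S ν ν₁ ν₂ →
      Split S (.app μ ν) (.app μ₁ ν₁) (.app μ₂ ν₂)

/-- Flat permutation equivalence `ρ ∼ σ` between `↦`-normal rewrites: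
generated by associativity and the Perm axiom, closed under reflexivity,
symmetry, transitivity and composition contexts. -/
inductive FlatEq (S : HRS B C R) : Rw B C R → Rw B C R → Prop
  | assoc : FlatEq S (.comp (.comp ρ σ) τ) (.comp ρ (.comp σ τ))
  | perm : Rw.IsMultistep μ → FNormal S μ → Split S μ μ₁ μ₂ →
      FlatEq S μ (.comp (flatten S μ₁) (flatten S μ₂))
  | refl : FlatEq S ρ ρ
  | symm : FlatEq S ρ σ → FlatEq S σ ρ
  | trans : FlatEq S ρ σ → FlatEq S σ τ → FlatEq S ρ τ
  | congCompL : FlatEq S ρ ρ' → FlatEq S (.comp ρ σ) (.comp ρ' σ)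
  | congCompR : FlatEq S σ σ' → FlatEq S (.comp ρ σ) (.comp ρ σ')

/-- Weak projection `μ/ν ⇝ ξ` of coinitial multisteps. -/
inductive WProj (S : HRS B C R) : Rw B C R → Rw B C R → Rw B C R → Prop
  | var : WProj S (.var n) (.var n) (.var n)
  | const : WProj S (.const c) (.const c) (.const c)
  | rule : WProj S (.rule r) (.rule r) (Tm.toRw (S.rhs r))
  | ruleL : WProj S (.rule r) (Tm.toRw (S.lhs r)) (.rule r)
  | ruleR : WProj S (Tm.toRw (S.lhs r)) (.rule r) (Tm.toRw (S.rhs r))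
  | abs : WProj S μ ν ξ → WProj S (.lam μ) (.lam ν) (.lam ξ)
  | app : WProj S μ₁ ν₁ ξ₁ → WProj S μ₂ ν₂ ξ₂ →
      WProj S (.app μ₁ μ₂) (.app ν₁ ν₂) (.app ξ₁ ξ₂)

/-- Compatibility of coinitial multisteps: both are η-expanded β-normal
forms, except that heads may be sources of rules. -/
inductive Compat (S : HRS B C R) : Rw B C R → Rw B C R → Prop
  | cvar : ms.length = ns.length →
      (∀ (i : ℕ) (m n' : Rw B C R), ms[i]? = some m → ns[i]? = some n' → Compat S m n') →
      Compat S (Rw.lamN k (Rw.apps (.var v) ms)) (Rw.lamN k (Rw.apps (.var v) ns))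
  | ccon : ms.length = ns.length →
      (∀ (i : ℕ) (m n' : Rw B C R), ms[i]? = some m → ns[i]? = some n' → Compat S m n') →
      Compat S (Rw.lamN k (Rw.apps (.const c) ms)) (Rw.lamN k (Rw.apps (.const c) ns))
  | crule : ms.length = ns.length →
      (∀ (i : ℕ) (m n' : Rw B C R), ms[i]? = some m → ns[i]? = some n' → Compat S m n') →
      Compat S (Rw.lamN k (Rw.apps (.rule r) ms)) (Rw.lamN k (Rw.apps (.rule r) ns))
  | cruleL : ms.length = ns.length →
      (∀ (i : ℕ) (m n' : Rw B C R), ms[i]? = some m → ns[i]? = some n' → Compat S m n') →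
      Compat S (Rw.lamN k (Rw.apps (.rule r) ms)) (Rw.lamN k (Rw.apps (Tm.toRw (S.lhs r)) ns))
  | cruleR : ms.length = ns.length →
      (∀ (i : ℕ) (m n' : Rw B C R), ms[i]? = some m → ns[i]? = some n' → Compat S m n') →
      Compat S (Rw.lamN k (Rw.apps (Tm.toRw (S.lhs r)) ms)) (Rw.lamN k (Rw.apps (.rule r) ns))

open Classical in
/-- The projection operator `μ/ν` for coinitial multisteps. -/
noncomputable def mproj (S : HRS B C R) (μ ν : Rw B C R) : Rw B C R :=
  if h : ∃ p : Rw B C R × Rw B C R × Rw B C R,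
      flatten S p.1 = flatten S μ ∧ flatten S p.2.1 = flatten S ν ∧ WProj S p.1 p.2.1 p.2.2
  then flatten S h.choose.2.2 else μ

/-- Projection of a flat multistep over a coinitial flat rewrite. -/
noncomputable def proj1 (S : HRS B C R) : Rw B C R → Rw B C R → Rw B C R
  | μ, .comp ρ₁ ρ₂ => proj1 S (proj1 S μ ρ₁) ρ₂
  | μ, ν => mproj S μ ν

/-- Projection of a flat rewrite over a coinitial flat multistep. -/
noncomputable def proj2 (S : HRS B C R) : Rw B C R → Rw B C R → Rw B C R
  | .comp ρ₁ ρ₂, μ => .comp (proj2 S ρ₁ μ) (proj2 S ρ₂ (proj1 S μ ρ₁))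
  | ν, μ => mproj S ν μ

/-- Projection `ρ/σ` of a flat rewrite over a coinitial flat rewrite. -/
noncomputable def proj3 (S : HRS B C R) : Rw B C R → Rw B C R → Rw B C R
  | ρ, .comp σ₁ σ₂ => proj3 S (proj3 S ρ σ₁) σ₂
  | ρ, μ => proj2 S ρ μ

/-- Projection `ρ ⫽ σ := ρ♭ / σ♭` for arbitrary coinitial rewrites. -/
noncomputable def aproj (S : HRS B C R) (ρ σ : Rw B C R) : Rw B C R :=
  proj3 S (flatten S ρ) (flatten S σ)

/-- Flat rewrites: compositions of `↦`-normal (flat) multisteps. -/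
inductive IsFlat (S : HRS B C R) : Rw B C R → Prop
  | ms : Rw.IsMultistep μ → FNormal S μ → IsFlat S μ
  | comp : IsFlat S ρ → IsFlat S σ → IsFlat S (.comp ρ σ)

/-- The rewrite denoted by a sequential rewrite `μ₁;…;μₙ;s̄`. -/
def seqToRw (p : List (Rw B C R) × Tm B C) : Rw B C R :=
  p.1.foldr Rw.comp (Tm.toRw p.2)

/-- Well-formedness of a sequential rewrite: all components are flat multisteps. -/
def SeqOK (S : HRS B C R) (p : List (Rw B C R) × Tm B C) : Prop :=
  (∀ μ ∈ p.1, Rw.IsMultistep μ ∧ FNormal S μ) ∧ FNormal S (Tm.toRw p.2)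

/-- Empty multisteps: those containing no rule symbols, i.e. coerced terms. -/
def EmptyMs (μ : Rw B C R) : Prop := ∃ t : Tm B C, μ = Tm.toRw t

/-- The standardization relation `▷` on sequential rewrites. -/
inductive Std (S : HRS B C R) : List (Rw B C R) × Tm B C → List (Rw B C R) × Tm B C → Prop
  | del : Std S (Tm.toRw t :: l, s) (l, s)
  | pull : FlatEq S μ₁₂ (.comp μ₁ μ₂) → FlatEq S μ₂₃ (.comp μ₂ μ₃) → ¬ EmptyMs μ₂ →
      Std S (μ₁ :: μ₂₃ :: l, s) (μ₁₂ :: μ₃ :: l, s)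
  | cong : Std S (l, s) (l', s) → Std S (μ :: l, s) (μ :: l', s)

/-- Strong equivalence `ρ ≍ σ` of sequential rewrites: same length, same final
term, componentwise flat-permutation-equivalent multisteps. -/
def StrongEq (S : HRS B C R) (p q : List (Rw B C R) × Tm B C) : Prop :=
  p.2 = q.2 ∧ List.Forall₂ (FlatEq S) p.1 q.1

/-- An unfolding of a multistep `μ`: a sequential rewrite of non-empty
multisteps flat-permutation-equivalent to `μ`. -/
def Unfolding (S : HRS B C R) (μ : Rw B C R) (p : List (Rw B C R) × Tm B C) : Prop :=
  SeqOK S p ∧ (∀ ν ∈ p.1, ¬ EmptyMs ν) ∧ FlatEq S μ (seqToRw p)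

/-- The finiteness condition: the lengths of unfoldings of any multistep are bounded. -/
def FinCond (S : HRS B C R) : Prop :=
  ∀ μ : Rw B C R, Rw.IsMultistep μ → WT S μ → ∃ N, ∀ p, Unfolding S μ p → p.1.length ≤ N


section Statement13Aux

/-! Auxiliary lemmas for `statement13`. -/

namespace Tm

theorem shift_var' (d c n : ℕ) :
    shift (B := B) (C := C) d c (.var n) = if n < c then .var n else .var (n + d) := rfl

theorem subst_var' (n k : ℕ) (u : Tm B C) :
    subst (.var n) k u =
      if n = k then shift k 0 u else if k < n then .var (n-1) else .var n := rfl

theorem shift_shift_le (t : Tm B C) : ∀ c c' d d', c ≤ c' → c' ≤ c + d →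
    shift d' c' (shift d c t) = shift (d + d') c t := by
  induction t with
  | var n =>
    intro c c' d d' h1 h2
    by_cases h : n < c
    · simp only [shift_var', if_pos h, if_pos (lt_of_lt_of_le h h1)]
    · simp only [shift_var', if_neg h, if_neg (show ¬ n + d < c' by omega), Nat.add_assoc]
  | const k => intro _ _ _ _ _ _; rfl
  | lam t ih =>
    intro c c' d d' h1 h2
    simp only [shift]
    rw [ih (c+1) (c'+1) d d' (by omega) (by omega)]
  | app t u iht ihu =>
    intro c c' d d' h1 h2
    simp only [shift]
    rw [iht _ _ _ _ h1 h2, ihu _ _ _ _ h1 h2]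

theorem shift_shift_cross (t : Tm B C) : ∀ c c' d d', c' ≤ c →
    shift d' c' (shift d c t) = shift d (c + d') (shift d' c' t) := by
  induction t with
  | var n =>
    intro c c' d d' h1
    by_cases h : n < c'
    · simp only [shift_var', if_pos h, if_pos (show n < c by omega),
        if_pos (show n < c + d' by omega)]
    · by_cases h2 : n < c
      · simp only [shift_var', if_neg h, if_pos h2, if_pos (show n + d' < c + d' by omega)]
      · simp only [shift_var', if_neg h, if_neg h2, if_neg (show ¬ n + d < c' by omega),
          if_neg (show ¬ n + d' < c + d' by omega)]
        congr 1 <;> omega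
  | const k => intro _ _ _ _ _; rfl
  | lam t ih =>
    intro c c' d d' h1
    simp only [shift]
    rw [ih (c+1) (c'+1) d d' (by omega), Nat.add_right_comm c 1 d']
  | app t u iht ihu =>
    intro c c' d d' h1
    simp only [shift]
    rw [iht _ _ _ _ h1, ihu _ _ _ _ h1]

theorem subst_shift_cancel (t : Tm B C) : ∀ c k d u, c ≤ k → k ≤ c + d →
    (shift (d+1) c t).subst k u = shift d c t := by
  induction t with
  | var n =>
    intro c k d u h1 h2
    by_cases h : n < c
    · simp only [shift_var', subst_var', if_pos h, if_neg (show ¬ n = k by omega),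
        if_neg (show ¬ k < n by omega)]
    · simp only [shift_var', subst_var', if_neg h,
        if_neg (show ¬ n + (d+1) = k by omega), if_pos (show k < n + (d+1) by omega)]
      congr 1 <;> omega
  | const k => intro _ _ _ _ _ _; rfl
  | lam t ih =>
    intro c k d u h1 h2
    simp only [shift, subst]
    rw [ih (c+1) (k+1) d u (by omega) (by omega)]
  | app t u iht ihu =>
    intro c k d u h1 h2
    simp only [shift, subst]
    rw [iht _ _ _ _ h1 h2, ihu _ _ _ _ h1 h2]

theorem shift_subst_hi (t : Tm B C) : ∀ c k d u, c ≤ k →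
    shift d c (t.subst k u) = (shift d c t).subst (k+d) u := by
  induction t with
  | var n =>
    intro c k d u h1
    rcases Nat.lt_trichotomy n k with h | h | h
    · by_cases h2 : n < c
      · simp only [subst_var', shift_var', if_neg (show ¬ n = k by omega),
          if_neg (show ¬ k < n by omega), if_pos h2, if_neg (show ¬ n = k + d by omega),
          if_neg (show ¬ k + d < n by omega)]
      · simp only [subst_var', shift_var', if_neg (show ¬ n = k by omega),
          if_neg (show ¬ k < n by omega), if_neg h2, if_neg (show ¬ n + d = k + d by omega),
          if_neg (show ¬ k + d < n + d by omega)]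
    · simp only [subst_var', shift_var', if_pos h, if_neg (show ¬ n < c by omega),
        if_pos (show n + d = k + d by omega)]
      exact shift_shift_le u 0 c k d (by omega) (by omega)
    · simp only [subst_var', shift_var', if_neg (show ¬ n = k by omega), if_pos h,
        if_neg (show ¬ n - 1 < c by omega), if_neg (show ¬ n < c by omega),
        if_neg (show ¬ n + d = k + d by omega), if_pos (show k + d < n + d by omega)]
      congr 1 <;> omega
  | const k => intro _ _ _ _ _; rfl
  | lam t ih =>
    intro c k d u h1
    simp only [shift, subst]
    rw [ih (c+1) (k+1) d u (by omega), Nat.add_right_comm k 1 d]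
  | app t u iht ihu =>
    intro c k d u h1
    simp only [shift, subst]
    rw [iht _ _ _ _ h1, ihu _ _ _ _ h1]

theorem shift_subst_lo (t : Tm B C) : ∀ c k d u, k ≤ c →
    shift d c (t.subst k u) = (shift d (c+1) t).subst k (shift d (c - k) u) := by
  induction t with
  | var n =>
    intro c k d u h1
    rcases Nat.lt_trichotomy n k with h | h | h
    · simp only [subst_var', shift_var', if_neg (show ¬ n = k by omega),
        if_neg (show ¬ k < n by omega), if_pos (show n < c by omega),
        if_pos (show n < c + 1 by omega)]
    · simp only [subst_var', shift_var', if_pos h, if_pos (show n < c + 1 by omega)]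
      have h2 : shift k 0 (shift d (c - k) u) = shift d (c - k + k) (shift k 0 u) :=
        shift_shift_cross u (c - k) 0 d k (by omega)
      rw [show c - k + k = c by omega] at h2
      exact h2.symm
    · by_cases h2 : n < c + 1
      · simp only [subst_var', shift_var', if_neg (show ¬ n = k by omega), if_pos h,
          if_pos h2, if_pos (show n - 1 < c by omega)]
      · simp only [subst_var', shift_var', if_neg (show ¬ n = k by omega), if_pos h,
          if_neg h2, if_neg (show ¬ n - 1 < c by omega),
          if_neg (show ¬ n + d = k by omega), if_pos (show k < n + d by omega)]
        congr 1 <;> omega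
  | const k => intro _ _ _ _ _; rfl
  | lam t ih =>
    intro c k d u h1
    simp only [shift, subst]
    rw [ih (c+1) (k+1) d u (by omega), show c + 1 - (k+1) = c - k by omega]
  | app t u iht ihu =>
    intro c k d u h1
    simp only [shift, subst]
    rw [iht _ _ _ _ h1, ihu _ _ _ _ h1]

theorem subst_subst (t : Tm B C) : ∀ j k u v, j ≤ k →
    (t.subst j v).subst k u = (t.subst (k+1) u).subst j (v.subst (k-j) u) := by
  induction t with
  | var n =>
    intro j k u v h1
    rcases Nat.lt_trichotomy n j with h | h | h
    · simp only [subst_var', if_neg (show ¬ n = j by omega),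
        if_neg (show ¬ j < n by omega), if_neg (show ¬ n = k by omega),
        if_neg (show ¬ k < n by omega), if_neg (show ¬ n = k + 1 by omega),
        if_neg (show ¬ k + 1 < n by omega)]
    · simp only [subst_var', if_pos h, if_neg (show ¬ n = k + 1 by omega),
        if_neg (show ¬ k + 1 < n by omega)]
      have h2 := shift_subst_hi v 0 (k - j) j u (by omega)
      rw [show k - j + j = k by omega] at h2
      exact h2.symm
    · rcases Nat.lt_trichotomy n (k+1) with h2 | h2 | h2
      · simp only [subst_var', if_neg (show ¬ n = j by omega), if_pos h,
          if_neg (show ¬ n - 1 = k by omega), if_neg (show ¬ k < n - 1 by omega),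
          if_neg (show ¬ n = k + 1 by omega), if_neg (show ¬ k + 1 < n by omega)]
      · simp only [subst_var', if_neg (show ¬ n = j by omega), if_pos h,
          if_pos (show n - 1 = k by omega), if_pos h2]
        exact (subst_shift_cancel u 0 j k _ (by omega) (by omega)).symm
      · simp only [subst_var', if_neg (show ¬ n = j by omega), if_pos h,
          if_neg (show ¬ n - 1 = k by omega), if_pos (show k < n - 1 by omega),
          if_neg (show ¬ n = k + 1 by omega), if_pos h2,
          if_neg (show ¬ n - 1 = j by omega), if_pos (show j < n - 1 by omega)]
  | const k => intro _ _ _ _ _; rfl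
  | lam t ih =>
    intro j k u v h1
    simp only [subst]
    rw [ih (j+1) (k+1) u v (by omega), show k + 1 - (j+1) = k - j by omega]
  | app t u iht ihu =>
    intro j k u v h1
    simp only [subst]
    rw [iht _ _ _ _ h1, ihu _ _ _ _ h1]

end Tm

variable {sig : C → Ty B}

theorem lookup_weak_lo {Δ Γ Ξ : List (Ty B)} {n : ℕ} {A : Ty B} (hn : n < Δ.length)
    (h : (Δ ++ Γ)[n]? = some A) : (Δ ++ (Ξ ++ Γ))[n]? = some A := by
  rw [List.getElem?_append_left hn] at h ⊢
  exact h

theorem lookup_weak_hi {Δ Γ Ξ : List (Ty B)} {n : ℕ} {A : Ty B} (hn : ¬ n < Δ.length)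
    (h : (Δ ++ Γ)[n]? = some A) : (Δ ++ (Ξ ++ Γ))[n + Ξ.length]? = some A := by
  rw [List.getElem?_append_right (by omega)] at h
  rw [List.getElem?_append_right (by omega), List.getElem?_append_right (by omega)]
  rw [show n + Ξ.length - Δ.length - Ξ.length = n - Δ.length by omega]
  exact h

theorem lookup_mid {Δ Γ : List (Ty B)} {A : Ty B} : (Δ ++ A :: Γ)[Δ.length]? = some A := by
  rw [List.getElem?_append_right (le_refl _), Nat.sub_self]
  simp

theorem lookup_sub_lo {Δ Γ : List (Ty B)} {A A₀ : Ty B} {n : ℕ} (hn : n < Δ.length)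
    (h : (Δ ++ A :: Γ)[n]? = some A₀) : (Δ ++ Γ)[n]? = some A₀ := by
  rw [List.getElem?_append_left hn] at h
  rw [List.getElem?_append_left hn]
  exact h

theorem lookup_sub_hi {Δ Γ : List (Ty B)} {A A₀ : Ty B} {n : ℕ} (hn : Δ.length < n)
    (h : (Δ ++ A :: Γ)[n]? = some A₀) : (Δ ++ Γ)[n - 1]? = some A₀ := by
  rw [List.getElem?_append_right (by omega)] at h
  obtain ⟨m, hm⟩ : ∃ m, n - Δ.length = m + 1 := ⟨n - Δ.length - 1, by omega⟩
  rw [hm, List.getElem?_cons_succ] at h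
  rw [List.getElem?_append_right (by omega), show n - 1 - Δ.length = m by omega]
  exact h

theorem tmty_append {Γ Γ' : List (Ty B)} {t : Tm B C} {A : Ty B}
    (h : TmTy sig Γ t A) : TmTy sig (Γ ++ Γ') t A := by
  induction h with
  | var hn =>
    refine .var ?_
    rw [List.getElem?_append_left (List.getElem?_eq_some_iff.mp hn).1]
    exact hn
  | const => exact .const
  | lam _ ih => exact .lam ih
  | app _ _ ih1 ih2 => exact .app ih1 ih2

theorem tmty_shift {Γ' : List (Ty B)} {t : Tm B C} {A : Ty B} (h : TmTy sig Γ' t A) :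
    ∀ Δ Ξ Γ, Γ' = Δ ++ Γ →
      TmTy sig (Δ ++ (Ξ ++ Γ)) (Tm.shift Ξ.length Δ.length t) A := by
  induction h with
  | @var Γ'' n A' hn =>
    intro Δ Ξ Γ hΓ
    subst hΓ
    by_cases h : n < Δ.length
    · rw [Tm.shift_var', if_pos h]
      exact .var (lookup_weak_lo h hn)
    · rw [Tm.shift_var', if_neg h]
      exact .var (lookup_weak_hi h hn)
  | const => intro _ _ _ _; exact .const
  | @lam A1 Γ'' t' B1 h' ih =>
    intro Δ Ξ Γ hΓ
    exact .lam (ih (A1 :: Δ) Ξ Γ (by simp [hΓ]))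
  | app _ _ ih1 ih2 =>
    intro Δ Ξ Γ hΓ
    exact .app (ih1 _ _ _ hΓ) (ih2 _ _ _ hΓ)

theorem tmty_subst {Γ' : List (Ty B)} {t : Tm B C} {A₀ : Ty B} (h : TmTy sig Γ' t A₀) :
    ∀ Δ A Γ u, Γ' = Δ ++ A :: Γ → TmTy sig Γ u A →
      TmTy sig (Δ ++ Γ) (t.subst Δ.length u) A₀ := by
  induction h with
  | @var Γ'' n A' hn =>
    intro Δ A Γ u hΓ hu
    subst hΓ
    rcases Nat.lt_trichotomy n Δ.length with h | h | h
    · rw [Tm.subst_var', if_neg (show ¬ n = Δ.length by omega),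
        if_neg (show ¬ Δ.length < n by omega)]
      exact .var (lookup_sub_lo h hn)
    · subst h
      rw [lookup_mid] at hn
      cases hn
      rw [Tm.subst_var', if_pos (rfl : (Δ.length : ℕ) = Δ.length)]
      exact tmty_shift hu [] Δ Γ rfl
    · rw [Tm.subst_var', if_neg (show ¬ n = Δ.length by omega), if_pos h]
      exact .var (lookup_sub_hi h hn)
  | const => intro _ _ _ _ _ _; exact .const
  | @lam A1 Γ'' t' B1 h' ih =>
    intro Δ A Γ u hΓ hu
    exact .lam (ih (A1 :: Δ) A Γ u (by simp [hΓ]) hu)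
  | app _ _ ih1 ih2 =>
    intro Δ A Γ u hΓ hu
    exact .app (ih1 _ _ _ _ hΓ hu) (ih2 _ _ _ _ hΓ hu)

theorem tmeq_reg {Γ : List (Ty B)} {s t : Tm B C} {A : Ty B} (h : TmEq sig Γ s t A) :
    TmTy sig Γ s A ∧ TmTy sig Γ t A := by
  induction h with
  | beta hs ht => exact ⟨.app (.lam hs) ht, tmty_subst hs [] _ _ _ rfl ht⟩
  | @eta Γ' s' A' B'' hs =>
    exact ⟨.lam (.app (tmty_shift hs [] [A'] Γ' rfl) (.var (by simp))), hs⟩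
  | refl hs => exact ⟨hs, hs⟩
  | symm _ ih => exact ⟨ih.2, ih.1⟩
  | trans _ _ ih1 ih2 => exact ⟨ih1.1, ih2.2⟩
  | congAbs _ ih => exact ⟨.lam ih.1, .lam ih.2⟩
  | congApp _ _ ih1 ih2 => exact ⟨.app ih1.1 ih2.1, .app ih1.2 ih2.2⟩

theorem tmeq_shift {Γ' : List (Ty B)} {s t : Tm B C} {A₀ : Ty B} (h : TmEq sig Γ' s t A₀) :
    ∀ Δ Ξ Γ, Γ' = Δ ++ Γ →
      TmEq sig (Δ ++ (Ξ ++ Γ)) (Tm.shift Ξ.length Δ.length s)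
        (Tm.shift Ξ.length Δ.length t) A₀ := by
  induction h with
  | @beta A1 Γ'' s0 B1 t0 hs ht =>
    intro Δ Ξ Γ hΓ
    have hrw := Tm.shift_subst_lo s0 Δ.length 0 Ξ.length t0 (by omega)
    simp only [Nat.sub_zero] at hrw
    simp only [Tm.shift]
    rw [hrw]
    exact .beta (tmty_shift hs (A1 :: Δ) Ξ Γ (by simp [hΓ])) (tmty_shift ht Δ Ξ Γ hΓ)
  | @eta Γ'' s0 A1 B1 hs =>
    intro Δ Ξ Γ hΓ
    simp only [Tm.shift]
    rw [if_pos (show 0 < Δ.length + 1 by omega)]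
    rw [← Tm.shift_shift_cross s0 Δ.length 0 Ξ.length 1 (by omega)]
    exact .eta (tmty_shift hs Δ Ξ Γ hΓ)
  | refl hs => intro Δ Ξ Γ hΓ; exact .refl (tmty_shift hs Δ Ξ Γ hΓ)
  | symm _ ih => intro Δ Ξ Γ hΓ; exact .symm (ih Δ Ξ Γ hΓ)
  | trans _ _ ih1 ih2 => intro Δ Ξ Γ hΓ; exact .trans (ih1 Δ Ξ Γ hΓ) (ih2 Δ Ξ Γ hΓ)
  | @congAbs A1 Γ'' s0 t0 B1 _ ih =>
    intro Δ Ξ Γ hΓ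
    exact .congAbs (ih (A1 :: Δ) Ξ Γ (by simp [hΓ]))
  | congApp _ _ ih1 ih2 =>
    intro Δ Ξ Γ hΓ
    exact .congApp (ih1 Δ Ξ Γ hΓ) (ih2 Δ Ξ Γ hΓ)

theorem tmeq_subst {Γ' : List (Ty B)} {s t : Tm B C} {A₀ : Ty B} (h : TmEq sig Γ' s t A₀) :
    ∀ Δ A Γ u, Γ' = Δ ++ A :: Γ → TmTy sig Γ u A →
      TmEq sig (Δ ++ Γ) (s.subst Δ.length u) (t.subst Δ.length u) A₀ := by
  induction h with
  | @beta A1 Γ'' s0 B1 t0 hs ht =>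
    intro Δ A Γ u hΓ hu
    have hrw := Tm.subst_subst s0 0 Δ.length u t0 (by omega)
    simp only [Nat.sub_zero] at hrw
    simp only [Tm.subst]
    rw [hrw]
    exact .beta (tmty_subst hs (A1 :: Δ) A Γ u (by simp [hΓ]) hu) (tmty_subst ht Δ A Γ u hΓ hu)
  | @eta Γ'' s0 A1 B1 hs =>
    intro Δ A Γ u hΓ hu
    simp only [Tm.subst]
    rw [if_neg (show ¬ 0 = Δ.length + 1 by omega),
      if_neg (show ¬ Δ.length + 1 < 0 by omega)]
    rw [← Tm.shift_subst_hi s0 0 Δ.length 1 u (by omega)]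
    exact .eta (tmty_subst hs Δ A Γ u hΓ hu)
  | refl hs => intro Δ A Γ u hΓ hu; exact .refl (tmty_subst hs Δ A Γ u hΓ hu)
  | symm _ ih => intro Δ A Γ u hΓ hu; exact .symm (ih Δ A Γ u hΓ hu)
  | trans _ _ ih1 ih2 =>
    intro Δ A Γ u hΓ hu
    exact .trans (ih1 Δ A Γ u hΓ hu) (ih2 Δ A Γ u hΓ hu)
  | @congAbs A1 Γ'' s0 t0 B1 _ ih =>
    intro Δ A Γ u hΓ hu
    exact .congAbs (ih (A1 :: Δ) A Γ u (by simp [hΓ]) hu)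
  | congApp _ _ ih1 ih2 =>
    intro Δ A Γ u hΓ hu
    exact .congApp (ih1 Δ A Γ u hΓ hu) (ih2 Δ A Γ u hΓ hu)

theorem nf_tmty (t : Tm B C) : ∀ Γ A,
    (LongNF sig Γ t A → TmTy sig Γ t A) ∧ (NeutralNF sig Γ t A → TmTy sig Γ t A) := by
  induction t with
  | var n =>
    intro Γ A
    constructor
    · intro h
      cases h with
      | neutral hn => cases hn with | var h => exact .var h
    · intro h
      cases h with | var h => exact .var h
  | const c =>
    intro Γ A
    have h2 : NeutralNF sig Γ (.const c) A → TmTy sig Γ (.const c) A := by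
      intro h
      cases h
      exact .const
    refine ⟨fun h => ?_, h2⟩
    cases h with
    | neutral hn => exact h2 hn
  | lam t ih =>
    intro Γ A
    constructor
    · intro h
      cases h with
      | lam h => exact .lam ((ih _ _).1 h)
      | neutral hn => cases hn
    · intro h
      cases h
  | app t u iht ihu =>
    intro Γ A
    constructor
    · intro h
      cases h with
      | neutral hn =>
        cases hn with | app h1 h2 => exact .app ((iht _ _).2 h1) ((ihu _ _).1 h2)
    · intro h
      cases h with | app h1 h2 => exact .app ((iht _ _).2 h1) ((ihu _ _).1 h2)

theorem lhs_tmty (S : HRS B C R) (r : R) (Γ : List (Ty B)) :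
    TmTy S.sig Γ (S.lhs r) (S.ruleTy r) := by
  have h0 : TmTy S.sig [] (S.lhs r) (S.ruleTy r) := (nf_tmty _ _ _).1 (S.lhs_nf r)
  exact tmty_append (Γ' := Γ) h0

theorem rhs_tmty (S : HRS B C R) (r : R) (Γ : List (Ty B)) :
    TmTy S.sig Γ (S.rhs r) (S.ruleTy r) := by
  have h0 : TmTy S.sig [] (S.rhs r) (S.ruleTy r) := (nf_tmty _ _ _).1 (S.rhs_nf r)
  exact tmty_append (Γ' := Γ) h0

theorem tmty_shift_id {Γ : List (Ty B)} {t : Tm B C} {A : Ty B} (h : TmTy sig Γ t A) :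
    ∀ c d, Γ.length ≤ c → Tm.shift d c t = t := by
  induction h with
  | @var Γ' n A' hn =>
    intro c d hc
    have := (List.getElem?_eq_some_iff.mp hn).1
    rw [Tm.shift_var', if_pos (by omega)]
  | const => intro _ _ _; rfl
  | lam _ ih =>
    intro c d hc
    simp only [Tm.shift]
    rw [ih (c+1) d (by simpa using Nat.succ_le_succ hc)]
  | app _ _ ih1 ih2 =>
    intro c d hc
    simp only [Tm.shift]
    rw [ih1 _ _ hc, ih2 _ _ hc]

theorem tmty_subst_id {Γ : List (Ty B)} {t : Tm B C} {A : Ty B} (h : TmTy sig Γ t A) :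
    ∀ k u, Γ.length ≤ k → t.subst k u = t := by
  induction h with
  | @var Γ' n A' hn =>
    intro k u hk
    have := (List.getElem?_eq_some_iff.mp hn).1
    rw [Tm.subst_var', if_neg (by omega), if_neg (by omega)]
  | const => intro _ _ _; rfl
  | lam _ ih =>
    intro k u hk
    simp only [Tm.subst]
    rw [ih (k+1) u (by simpa using Nat.succ_le_succ hk)]
  | app _ _ ih1 ih2 =>
    intro k u hk
    simp only [Tm.subst]
    rw [ih1 _ _ hk, ih2 _ _ hk]

theorem toRw_shift (t : Tm B C) : ∀ c d,
    Rw.shiftR (R := R) d c (Tm.toRw t) = Tm.toRw (Tm.shift d c t) := by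
  induction t with
  | var n =>
    intro c d
    by_cases h : n < c
    · rw [Tm.shift_var', if_pos h]; simp [Tm.toRw, Rw.shiftR, h]
    · rw [Tm.shift_var', if_neg h]; simp [Tm.toRw, Rw.shiftR, h]
  | const k => intro _ _; rfl
  | lam t ih => intro c d; simp only [Tm.toRw, Tm.shift, Rw.shiftR]; rw [ih]
  | app t u iht ihu => intro c d; simp only [Tm.toRw, Tm.shift, Rw.shiftR]; rw [iht, ihu]

theorem toRw_rwty {S : HRS B C R} {Γ : List (Ty B)} {t : Tm B C} {A : Ty B}
    (h : TmTy S.sig Γ t A) : RwTy S Γ (Tm.toRw t) t t A := by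
  induction h with
  | var hn => exact .var hn
  | const => exact .const
  | lam _ ih => exact .abs ih
  | app _ _ ih1 ih2 => exact .app ih1 ih2

theorem rwty_reg {S : HRS B C R} {Γ : List (Ty B)} {ρ : Rw B C R} {s t : Tm B C} {A : Ty B}
    (h : RwTy S Γ ρ s t A) : TmTy S.sig Γ s A ∧ TmTy S.sig Γ t A := by
  induction h with
  | var hn => exact ⟨.var hn, .var hn⟩
  | const => exact ⟨.const, .const⟩
  | rule => exact ⟨lhs_tmty _ _ _, rhs_tmty _ _ _⟩
  | abs _ ih => exact ⟨.lam ih.1, .lam ih.2⟩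
  | app _ _ ih1 ih2 => exact ⟨.app ih1.1 ih2.1, .app ih1.2 ih2.2⟩
  | comp _ _ ih1 ih2 => exact ⟨ih1.1, ih2.2⟩
  | conv _ hs ht ih => exact ⟨(tmeq_reg hs).1, (tmeq_reg ht).2⟩

theorem rwty_src_tgt {S : HRS B C R} {Γ : List (Ty B)} {ρ : Rw B C R} {s t : Tm B C}
    {A : Ty B} (h : RwTy S Γ ρ s t A) :
    (TmTy S.sig Γ (Rw.src S ρ) A ∧ TmEq S.sig Γ s (Rw.src S ρ) A) ∧
    (TmTy S.sig Γ (Rw.tgt S ρ) A ∧ TmEq S.sig Γ (Rw.tgt S ρ) t A) := by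
  induction h with
  | var hn => exact ⟨⟨.var hn, .refl (.var hn)⟩, ⟨.var hn, .refl (.var hn)⟩⟩
  | const => exact ⟨⟨.const, .refl .const⟩, ⟨.const, .refl .const⟩⟩
  | rule =>
    exact ⟨⟨lhs_tmty _ _ _, .refl (lhs_tmty _ _ _)⟩,
      ⟨rhs_tmty _ _ _, .refl (rhs_tmty _ _ _)⟩⟩
  | abs _ ih =>
    exact ⟨⟨.lam ih.1.1, .congAbs ih.1.2⟩, ⟨.lam ih.2.1, .congAbs ih.2.2⟩⟩
  | app _ _ ih1 ih2 =>
    exact ⟨⟨.app ih1.1.1 ih2.1.1, .congApp ih1.1.2 ih2.1.2⟩,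
      ⟨.app ih1.2.1 ih2.2.1, .congApp ih1.2.2 ih2.2.2⟩⟩
  | comp _ _ ih1 ih2 => exact ⟨ih1.1, ih2.2⟩
  | conv _ hs ht ih =>
    exact ⟨⟨ih.1.1, .trans hs ih.1.2⟩, ⟨ih.2.1, .trans ih.2.2 ht⟩⟩

theorem rwty_shift {S : HRS B C R} {Γ' : List (Ty B)} {ρ : Rw B C R} {s t : Tm B C}
    {A₀ : Ty B} (h : RwTy S Γ' ρ s t A₀) :
    ∀ Δ Ξ Γ, Γ' = Δ ++ Γ →
      RwTy S (Δ ++ (Ξ ++ Γ)) (Rw.shiftR Ξ.length Δ.length ρ)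
        (Tm.shift Ξ.length Δ.length s) (Tm.shift Ξ.length Δ.length t) A₀ := by
  induction h with
  | @var Γ'' n A' hn =>
    intro Δ Ξ Γ hΓ
    subst hΓ
    by_cases h : n < Δ.length
    · simp only [Rw.shiftR, Tm.shift_var', if_pos h]
      exact .var (lookup_weak_lo h hn)
    · simp only [Rw.shiftR, Tm.shift_var', if_neg h]
      exact .var (lookup_weak_hi h hn)
  | const => intro _ _ _ _; exact .const
  | @rule Γ'' r =>
    intro Δ Ξ Γ hΓ
    rw [tmty_shift_id (lhs_tmty S r []) Δ.length Ξ.length (Nat.zero_le _),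
      tmty_shift_id (rhs_tmty S r []) Δ.length Ξ.length (Nat.zero_le _)]
    exact .rule
  | @abs A1 Γ'' ρ0 s0 t0 B1 _ ih =>
    intro Δ Ξ Γ hΓ
    exact .abs (ih (A1 :: Δ) Ξ Γ (by simp [hΓ]))
  | app _ _ ih1 ih2 =>
    intro Δ Ξ Γ hΓ
    exact .app (ih1 _ _ _ hΓ) (ih2 _ _ _ hΓ)
  | comp _ _ ih1 ih2 =>
    intro Δ Ξ Γ hΓ
    exact .comp (ih1 _ _ _ hΓ) (ih2 _ _ _ hΓ)
  | conv _ hs ht ih =>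
    intro Δ Ξ Γ hΓ
    subst hΓ
    exact .conv (ih _ _ _ rfl) (tmeq_shift hs _ _ _ rfl) (tmeq_shift ht _ _ _ rfl)

theorem rwty_subst_tm {S : HRS B C R} {Γ' : List (Ty B)} {ρ : Rw B C R} {s t : Tm B C}
    {A₀ : Ty B} (h : RwTy S Γ' ρ s t A₀) :
    ∀ Δ A Γ r, Γ' = Δ ++ A :: Γ → TmTy S.sig Γ r A →
      RwTy S (Δ ++ Γ) (Rw.substR ρ Δ.length (Tm.toRw r))
        (s.subst Δ.length r) (t.subst Δ.length r) A₀ := by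
  induction h with
  | @var Γ'' n A' hn =>
    intro Δ A Γ r hΓ hr
    subst hΓ
    rcases Nat.lt_trichotomy n Δ.length with h | h | h
    · simp only [Rw.substR, Tm.subst_var', if_neg (show ¬ n = Δ.length by omega),
        if_neg (show ¬ Δ.length < n by omega)]
      exact .var (lookup_sub_lo h hn)
    · subst h
      rw [lookup_mid] at hn
      cases hn
      simp only [Rw.substR, Tm.subst_var', if_pos (rfl : (Δ.length : ℕ) = Δ.length)]
      rw [toRw_shift]
      exact toRw_rwty (tmty_shift hr [] Δ Γ rfl)
    · simp only [Rw.substR, Tm.subst_var', if_neg (show ¬ n = Δ.length by omega), if_pos h]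
      exact .var (lookup_sub_hi h hn)
  | const => intro _ _ _ _ _ _; exact .const
  | @rule Γ'' r0 =>
    intro Δ A Γ r hΓ hr
    rw [tmty_subst_id (lhs_tmty S r0 []) Δ.length r (Nat.zero_le _),
      tmty_subst_id (rhs_tmty S r0 []) Δ.length r (Nat.zero_le _)]
    exact .rule
  | @abs A1 Γ'' ρ0 s0 t0 B1 _ ih =>
    intro Δ A Γ r hΓ hr
    exact .abs (ih (A1 :: Δ) A Γ r (by simp [hΓ]) hr)
  | app _ _ ih1 ih2 =>
    intro Δ A Γ r hΓ hr
    exact .app (ih1 _ _ _ _ hΓ hr) (ih2 _ _ _ _ hΓ hr)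
  | comp _ _ ih1 ih2 =>
    intro Δ A Γ r hΓ hr
    exact .comp (ih1 _ _ _ _ hΓ hr) (ih2 _ _ _ _ hΓ hr)
  | conv _ hs ht ih =>
    intro Δ A Γ r hΓ hr
    subst hΓ
    exact .conv (ih _ _ _ _ rfl hr) (tmeq_subst hs _ _ _ _ rfl hr)
      (tmeq_subst ht _ _ _ _ rfl hr)

theorem rwty_subst_rw {S : HRS B C R} {Γ' : List (Ty B)} {r : Tm B C} {A₀ : Ty B}
    (h : TmTy S.sig Γ' r A₀) :
    ∀ Δ A Γ (ρ : Rw B C R) u v, Γ' = Δ ++ A :: Γ → RwTy S Γ ρ u v A →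
      RwTy S (Δ ++ Γ) (Rw.substR (Tm.toRw r) Δ.length ρ)
        (r.subst Δ.length u) (r.subst Δ.length v) A₀ := by
  induction h with
  | @var Γ'' n A' hn =>
    intro Δ A Γ ρ u v hΓ hρ
    subst hΓ
    rcases Nat.lt_trichotomy n Δ.length with h | h | h
    · simp only [Tm.toRw, Rw.substR, Tm.subst_var', if_neg (show ¬ n = Δ.length by omega),
        if_neg (show ¬ Δ.length < n by omega)]
      exact .var (lookup_sub_lo h hn)
    · subst h
      rw [lookup_mid] at hn
      cases hn
      simp only [Tm.toRw, Rw.substR, Tm.subst_var',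
        if_pos (rfl : (Δ.length : ℕ) = Δ.length)]
      exact rwty_shift hρ [] Δ Γ rfl
    · simp only [Tm.toRw, Rw.substR, Tm.subst_var',
        if_neg (show ¬ n = Δ.length by omega), if_pos h]
      exact .var (lookup_sub_hi h hn)
  | const => intro _ _ _ _ _ _ _ _; exact .const
  | @lam A1 Γ'' t' B1 h' ih =>
    intro Δ A Γ ρ u v hΓ hρ
    exact .abs (ih (A1 :: Δ) A Γ ρ u v (by simp [hΓ]) hρ)
  | app _ _ ih1 ih2 =>
    intro Δ A Γ ρ u v hΓ hρ
    exact .app (ih1 _ _ _ _ _ _ hΓ hρ) (ih2 _ _ _ _ _ _ hΓ hρ)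

theorem perm_subst_tm {S : HRS B C R} {Γ : List (Ty B)} {A B' : Ty B} {ρ ρ' : Rw B C R}
    {s t s' t' r : Tm B C} (hρ : RwTy S (A :: Γ) ρ s t B')
    (hρ' : RwTy S (A :: Γ) ρ' s' t' B') (h : PermEq S ρ ρ') (hr : TmTy S.sig Γ r A) :
    PermEq S (Rw.substR ρ 0 (Tm.toRw r)) (Rw.substR ρ' 0 (Tm.toRw r)) := by
  have hsub : RwTy S Γ (Rw.substR ρ 0 (Tm.toRw r)) (s.subst 0 r) (t.subst 0 r) B' :=
    rwty_subst_tm hρ [] A Γ r rfl hr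
  have hsub' : RwTy S Γ (Rw.substR ρ' 0 (Tm.toRw r)) (s'.subst 0 r) (t'.subst 0 r) B' :=
    rwty_subst_tm hρ' [] A Γ r rfl hr
  have hApp : RwTy S Γ (.app (.lam ρ) (Tm.toRw r)) (.app (.lam s) r) (.app (.lam t) r) B' :=
    .app (.abs hρ) (toRw_rwty hr)
  have hApp' : RwTy S Γ (.app (.lam ρ') (Tm.toRw r))
      (.app (.lam s') r) (.app (.lam t') r) B' := .app (.abs hρ') (toRw_rwty hr)
  exact .trans (.symm (.betaRT ⟨_, _, _, _, hApp⟩ ⟨_, _, _, _, hsub⟩))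
    (.trans (.congAppL (.congLam h) ⟨_, _, _, _, toRw_rwty hr⟩)
      (.betaRT ⟨_, _, _, _, hApp'⟩ ⟨_, _, _, _, hsub'⟩))

theorem perm_subst_rw {S : HRS B C R} {Γ : List (Ty B)} {A B' : Ty B} {r : Tm B C}
    {ρ ρ' : Rw B C R} {u v u' v' : Tm B C} (hr : TmTy S.sig (A :: Γ) r B')
    (hρ : RwTy S Γ ρ u v A) (hρ' : RwTy S Γ ρ' u' v' A) (h : PermEq S ρ ρ') :
    PermEq S (Rw.substR (Tm.toRw r) 0 ρ) (Rw.substR (Tm.toRw r) 0 ρ') := by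
  have hsub : RwTy S Γ (Rw.substR (Tm.toRw r) 0 ρ) (r.subst 0 u) (r.subst 0 v) B' :=
    rwty_subst_rw hr [] A Γ ρ u v rfl hρ
  have hsub' : RwTy S Γ (Rw.substR (Tm.toRw r) 0 ρ') (r.subst 0 u') (r.subst 0 v') B' :=
    rwty_subst_rw hr [] A Γ ρ' u' v' rfl hρ'
  have hApp : RwTy S Γ (.app (.lam (Tm.toRw r)) ρ) (.app (.lam r) u) (.app (.lam r) v) B' :=
    .app (.abs (toRw_rwty hr)) hρ
  have hApp' : RwTy S Γ (.app (.lam (Tm.toRw r)) ρ')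
      (.app (.lam r) u') (.app (.lam r) v') B' := .app (.abs (toRw_rwty hr)) hρ'
  exact .trans (.symm (.betaTR ⟨_, _, _, _, hApp⟩ ⟨_, _, _, _, hsub⟩))
    (.trans (.congAppR ⟨_, _, _, _, RwTy.abs (toRw_rwty hr)⟩ h)
      (.betaTR ⟨_, _, _, _, hApp'⟩ ⟨_, _, _, _, hsub'⟩))

theorem substRR_perm_app {S : HRS B C R} {Γ : List (Ty B)} {A B' : Ty B} {ρ σ : Rw B C R}
    {s t u v : Tm B C} (hρ : RwTy S (A :: Γ) ρ s t B') (hσ : RwTy S Γ σ u v A) :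
    PermEq S (substRR S ρ 0 σ) (.app (.lam ρ) σ) := by
  obtain ⟨⟨hsσty, hsσeq⟩, ⟨htσty, htσeq⟩⟩ := rwty_src_tgt hσ
  obtain ⟨⟨hsρty, hsρeq⟩, ⟨htρty, htρeq⟩⟩ := rwty_src_tgt hρ
  obtain ⟨hu, hv⟩ := rwty_reg hσ
  have Tlam : RwTy S Γ (.lam ρ) (.lam s) (.lam t) (.arrow A B') := .abs hρ
  have Ttgtlam : RwTy S Γ (Tm.toRw (Rw.tgt S (.lam ρ))) (.lam t) (Rw.tgt S (.lam ρ))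
      (.arrow A B') :=
    RwTy.conv (toRw_rwty (TmTy.lam htρty)) (TmEq.symm (.congAbs htρeq))
      (.refl (TmTy.lam htρty))
  have Tcomplam : RwTy S Γ (.comp (.lam ρ) (Tm.toRw (Rw.tgt S (.lam ρ)))) (.lam s)
      (Rw.tgt S (.lam ρ)) (.arrow A B') := .comp Tlam Ttgtlam
  have Tsrcσ : RwTy S Γ (Tm.toRw (Rw.src S σ)) (Rw.src S σ) (Rw.src S σ) A :=
    toRw_rwty hsσty
  have Tσconv : RwTy S Γ σ (Rw.src S σ) v A := RwTy.conv hσ (.symm hsσeq) (.refl hv)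
  have Tcompσ : RwTy S Γ (.comp (Tm.toRw (Rw.src S σ)) σ) (Rw.src S σ) v A :=
    .comp Tsrcσ Tσconv
  have C1 : RwTy S Γ (.app (.lam ρ) (Tm.toRw (Rw.src S σ))) (.app (.lam s) (Rw.src S σ))
      (.app (.lam t) (Rw.src S σ)) B' := .app Tlam Tsrcσ
  have C2 : RwTy S Γ (.app (Tm.toRw (Rw.tgt S (.lam ρ))) σ) (.app (.lam t) (Rw.src S σ))
      (.app (Rw.tgt S (.lam ρ)) v) B' := .app Ttgtlam Tσconv
  have Tmid : RwTy S Γ (.comp (.app (.lam ρ) (Tm.toRw (Rw.src S σ)))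
      (.app (Tm.toRw (Rw.tgt S (.lam ρ))) σ)) (.app (.lam s) (Rw.src S σ))
      (.app (Rw.tgt S (.lam ρ)) v) B' := .comp C1 C2
  have Tmid2 : RwTy S Γ (.app (.comp (.lam ρ) (Tm.toRw (Rw.tgt S (.lam ρ))))
      (.comp (Tm.toRw (Rw.src S σ)) σ)) (.app (.lam s) (Rw.src S σ))
      (.app (Rw.tgt S (.lam ρ)) v) B' := .app Tcomplam Tcompσ
  have Tbeta1 : RwTy S Γ (Rw.substR ρ 0 (Tm.toRw (Rw.src S σ)))
      (s.subst 0 (Rw.src S σ)) (t.subst 0 (Rw.src S σ)) B' :=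
    rwty_subst_tm hρ [] A Γ _ rfl hsσty
  have Tfun : RwTy S Γ (.lam (Tm.toRw (Rw.tgt S ρ))) (.lam (Rw.tgt S ρ))
      (.lam (Rw.tgt S ρ)) (.arrow A B') := .abs (toRw_rwty htρty)
  have Tbeta2l : RwTy S Γ (.app (.lam (Tm.toRw (Rw.tgt S ρ))) σ)
      (.app (.lam (Rw.tgt S ρ)) u) (.app (.lam (Rw.tgt S ρ)) v) B' := .app Tfun hσ
  have Tbeta2r : RwTy S Γ (Rw.substR (Tm.toRw (Rw.tgt S ρ)) 0 σ)
      ((Rw.tgt S ρ).subst 0 u) ((Rw.tgt S ρ).subst 0 v) B' :=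
    rwty_subst_rw htρty [] A Γ σ u v rfl hσ
  have e1 : PermEq S (.comp (.lam ρ) (Tm.toRw (Rw.tgt S (.lam ρ)))) (.lam ρ) :=
    .idR ⟨_, _, _, _, Tcomplam⟩ ⟨_, _, _, _, Tlam⟩
  have e2 : PermEq S (.comp (Tm.toRw (Rw.src S σ)) σ) σ :=
    .idL ⟨_, _, _, _, Tcompσ⟩ ⟨_, _, _, _, hσ⟩
  have e3 : PermEq S (.comp (.app (.lam ρ) (Tm.toRw (Rw.src S σ)))
      (.app (Tm.toRw (Rw.tgt S (.lam ρ))) σ))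
      (.app (.comp (.lam ρ) (Tm.toRw (Rw.tgt S (.lam ρ))))
        (.comp (Tm.toRw (Rw.src S σ)) σ)) :=
    .app ⟨_, _, _, _, Tmid⟩ ⟨_, _, _, _, Tmid2⟩
  have e4 : PermEq S (.app (.lam ρ) (Tm.toRw (Rw.src S σ)))
      (Rw.substR ρ 0 (Tm.toRw (Rw.src S σ))) :=
    .betaRT ⟨_, _, _, _, C1⟩ ⟨_, _, _, _, Tbeta1⟩
  have e5 : PermEq S (.app (.lam (Tm.toRw (Rw.tgt S ρ))) σ)
      (Rw.substR (Tm.toRw (Rw.tgt S ρ)) 0 σ) :=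
    .betaTR ⟨_, _, _, _, Tbeta2l⟩ ⟨_, _, _, _, Tbeta2r⟩
  refine PermEq.symm ?_
  refine PermEq.trans (.congAppL (.symm e1) ⟨_, _, _, _, hσ⟩) ?_
  refine PermEq.trans (.congAppR ⟨_, _, _, _, Tcomplam⟩ (.symm e2)) ?_
  refine PermEq.trans (.symm e3) ?_
  refine PermEq.trans (.congCompL e4 ⟨_, _, _, _, C2⟩) ?_
  exact PermEq.congCompR ⟨_, _, _, _, Tbeta1⟩ e5

end Statement13Aux

end HOR

open HOR in
/-- congruence of permutation equivalence below the three
notions of substitution. -/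
theorem statement13 {B C R : Type} (S : HRS B C R) (hOrth : Orthogonal S) :
    (∀ (Γ : List (Ty B)) (A B' : Ty B) (ρ ρ' : Rw B C R) (s t s' t' r : Tm B C),
      RwTy S (A :: Γ) ρ s t B' → RwTy S (A :: Γ) ρ' s' t' B' → PermEq S ρ ρ' →
      TmTy S.sig Γ r A →
      PermEq S (Rw.substR ρ 0 (Tm.toRw r)) (Rw.substR ρ' 0 (Tm.toRw r))) ∧
    (∀ (Γ : List (Ty B)) (A B' : Ty B) (r : Tm B C) (ρ ρ' : Rw B C R) (s t s' t' : Tm B C),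
      TmTy S.sig (A :: Γ) r B' → RwTy S Γ ρ s t A → RwTy S Γ ρ' s' t' A → PermEq S ρ ρ' →
      PermEq S (Rw.substR (Tm.toRw r) 0 ρ) (Rw.substR (Tm.toRw r) 0 ρ')) ∧
    (∀ (Γ : List (Ty B)) (A B' : Ty B) (ρ ρ' σ σ' : Rw B C R)
        (s t s' t' u v u' v' : Tm B C),
      RwTy S (A :: Γ) ρ s t B' → RwTy S (A :: Γ) ρ' s' t' B' → PermEq S ρ ρ' →
      RwTy S Γ σ u v A → RwTy S Γ σ' u' v' A → PermEq S σ σ' →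
      PermEq S (substRR S ρ 0 σ) (substRR S ρ' 0 σ')) := by
  refine ⟨?_, ?_, ?_⟩
  · intro Γ A B' ρ ρ' s t s' t' r hρ hρ' h hr
    exact perm_subst_tm hρ hρ' h hr
  · intro Γ A B' r ρ ρ' s t s' t' hr hρ hρ' h
    exact perm_subst_rw hr hρ hρ' h
  · intro Γ A B' ρ ρ' σ σ' s t s' t' u v u' v' hρ hρ' hPρ hσ hσ' hPσ
    exact PermEq.trans (substRR_perm_app hρ hσ)
      (.trans (.congAppL (.congLam hPρ) ⟨_, _, _, _, hσ⟩)
        (.trans (.congAppR ⟨_, _, _, _, RwTy.abs hρ'⟩ hPσ)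
          (.symm (substRR_perm_app hρ' hσ'))))
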